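/- arXiv:1906.04856 — 3 statements merged into one kernel-verified Lean document; each statement's English description precedes it below -/
import Mathlib

section
/- Let X and Y be vectors (finite families of elements) in a commutative ring without zero divisors (e.g., an integral domain or ℝⁿ components). If the symmetrized products X_a Y_b + X_b Y_a = 0 for all indices a, b, then X = 0 or Y = 0. -/
/-- If two vectors `X, Y : Fin n → ℝ` satisfy `X a * Y b + X b * Y a = 0` for all indices
`a, b`, then `X = 0` or `Y = 0`. -/
theorem stmt_3 (n : ℕ) (X Y : Fin n → ℝ)
    (h : ∀ a b : Fin n, X a * Y b + X b * Y a = 0) :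
    (∀ a, X a = 0) ∨ (∀ b, Y b = 0) := by
  by_contra hc
  push_neg at hc
  obtain ⟨⟨a, ha⟩, ⟨b, hb⟩⟩ := hc
  have hya : Y a = 0 := by
    have := h a a
    have hxy : X a * Y a = 0 := by linarith
    rcases mul_eq_zero.mp hxy with h' | h' <;> [exact absurd h' ha; exact h']
  have hxb : X b = 0 := by
    have := h b b
    have hxy : X b * Y b = 0 := by linarith
    rcases mul_eq_zero.mp hxy with h' | h' <;> [exact h'; exact absurd h' hb]
  have := h a b
  rw [hya, hxb] at this
  simp at this
  rcases this with h' | h' <;> [exact ha h'; exact hb h']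
end

section
/- Suppose ν̂ and ν̂' are continuous SL(2,ℂ)-valued functions on the closed unit disk, holomorphic in the open disk, satisfying ν̂(γ)ν̂ᵀ(1/γ) = ν̂'(γ)ν̂'ᵀ(1/γ) for all |γ| = 1. Then K := ν̂⁻¹(γ)ν̂'(γ) is a constant matrix independent of γ, and K is orthogonal (KKᵀ = I). -/
/-!
Set `f γ = ν̂(γ)⁻¹ ν̂'(γ)` and `g γ = (ν̂'(γ)⁻¹ ν̂(γ))ᵀ`. Both are holomorphic in the disk and
continuous up to the circle, and the factorization hypothesis says exactly `f γ = g (1/γ)` on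
the circle. Writing `f w` as a Cauchy circle average and substituting `z ↦ 1/z` turns it into the
mean value of the holomorphic function `z ↦ (1 - w z)⁻¹ g z`, which is `g 0`. So `f` is the
constant `K = g 0`, and the hypothesis at `γ = 1` gives `K Kᵀ = 1`.
-/

open Matrix Metric Set Real

theorem one_sub_mul_ne_zero_of_norm_lt_one {w z : ℂ} (hw : ‖w‖ < 1) (hz : ‖z‖ ≤ 1) :
    1 - w * z ≠ 0 := by
  refine sub_ne_zero.mpr fun h => ?_
  have : ‖w * z‖ < 1 := by
    rw [norm_mul]
    nlinarith [norm_nonneg w, norm_nonneg z]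
  simp [← h] at this

section InversionOnCircle

variable {E : Type*} [NormedAddCommGroup E] [NormedSpace ℂ E] [CompleteSpace E]

theorem DiffContOnCl.apply_eq_of_eqOn_sphere_comp_inv {f g : ℂ → E}
    (hf : DiffContOnCl ℂ f (ball 0 1)) (hg : DiffContOnCl ℂ g (ball 0 1))
    (hfg : EqOn f (fun z => g z⁻¹) (sphere 0 1)) {w : ℂ} (hw : w ∈ ball 0 1) :
    f w = g 0 := by
  have hweight : DiffContOnCl ℂ (fun z : ℂ => (1 - w * z)⁻¹) (ball 0 1) := by
    refine ((differentiable_id.const_mul w).const_sub 1).diffContOnCl.inv fun z hz => ?_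
    rw [closure_ball 0 one_ne_zero, mem_closedBall_zero_iff] at hz
    exact one_sub_mul_ne_zero_of_norm_lt_one (mem_ball_zero_iff.mp hw) hz
  -- the mean value theorems are stated for discs of radius `|R|`
  rw [← abs_one (α := ℝ)] at hf hg hw hfg hweight
  calc f w = Real.circleAverage (fun z => (z / (z - w)) • f z) 0 1 := by
        simpa using (hf.circleAverage_smul_div hw).symm
    _ = Real.circleAverage (fun z => (z / (z - w)) • g z⁻¹) 0 1 :=
        circleAverage_congr_sphere fun z hz => by simp only [hfg hz]
    _ = Real.circleAverage (fun z => (z⁻¹ / (z⁻¹ - w)) • g z) 0 1 := by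
        rw [← circleAverage_zero_one_congr_inv]
        simp only [inv_inv]
    _ = Real.circleAverage (fun z => (1 - w * z)⁻¹ • g z) 0 1 := by
        refine circleAverage_congr_sphere fun z hz => ?_
        have hz0 : z ≠ 0 := by rintro rfl; simp at hz
        congr 1
        field_simp
    _ = (1 - w * 0)⁻¹ • g 0 := (hweight.smul hg).circleAverage
    _ = g 0 := by simp

theorem DiffContOnCl.eqOn_closedBall_of_eqOn_sphere_comp_inv {f g : ℂ → E}
    (hf : DiffContOnCl ℂ f (ball 0 1)) (hg : DiffContOnCl ℂ g (ball 0 1))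
    (hfg : EqOn f (fun z => g z⁻¹) (sphere 0 1)) :
    EqOn f (fun _ => g 0) (closedBall 0 1) := by
  have hcl : closure (ball (0 : ℂ) 1) = closedBall 0 1 := closure_ball 0 one_ne_zero
  refine EqOn.of_subset_closure (fun w hw => hf.apply_eq_of_eqOn_sphere_comp_inv hg hfg hw)
    (hcl ▸ hf.continuousOn) continuousOn_const ball_subset_closedBall hcl.ge

end InversionOnCircle

namespace Matrix

variable {n α : Type*} [Fintype n] [DecidableEq n] [CommRing α]

theorem inv_eq_adjugate_of_det_eq_one {A : Matrix n n α} (h : A.det = 1) : A⁻¹ = A.adjugate := by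
  rw [inv_def, h, Ring.inverse_one, one_smul]

theorem inv_mul_eq_transpose_of_mul_transpose_eq {P P' Q Q' : Matrix n n α}
    (hP : IsUnit P.det) (hQ' : IsUnit Q'.det) (h : P * Qᵀ = P' * Q'ᵀ) :
    P⁻¹ * P' = (Q'⁻¹ * Q)ᵀ := by
  have hQ't : IsUnit Q'ᵀ.det := by rwa [det_transpose]
  calc P⁻¹ * P' = P⁻¹ * (P' * Q'ᵀ) * Q'ᵀ⁻¹ := by
        rw [mul_assoc, mul_assoc, mul_nonsing_inv _ hQ't, mul_one]
    _ = Qᵀ * Q'ᵀ⁻¹ := by rw [← h, ← mul_assoc, nonsing_inv_mul _ hP, one_mul]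
    _ = (Q'⁻¹ * Q)ᵀ := by rw [transpose_mul, transpose_nonsing_inv]

theorem inv_mul_mul_transpose_eq_one_of_mul_transpose_eq {P P' : Matrix n n α}
    (hP : IsUnit P.det) (hP' : IsUnit P'.det) (h : P * Pᵀ = P' * P'ᵀ) :
    (P⁻¹ * P') * (P⁻¹ * P')ᵀ = 1 := by
  nth_rw 2 [inv_mul_eq_transpose_of_mul_transpose_eq hP hP' h]
  rw [transpose_transpose, ← mul_assoc,
    mul_assoc P⁻¹, mul_nonsing_inv _ hP', mul_one, nonsing_inv_mul _ hP]

theorem diffContOnCl_adjugate_mul_apply {𝕜 F : Type*} [NontriviallyNormedField 𝕜]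
    [NormedAddCommGroup F] [NormedSpace 𝕜 F] {s : Set F} {M N : F → Matrix (Fin 2) (Fin 2) 𝕜}
    (hM : ∀ i j, DiffContOnCl 𝕜 (fun x => M x i j) s)
    (hN : ∀ i j, DiffContOnCl 𝕜 (fun x => N x i j) s) (i j : Fin 2) :
    DiffContOnCl 𝕜 (fun x => ((M x).adjugate * N x) i j) s := by
  have hMd i j := (hM i j).differentiableOn
  have hNd i j := (hN i j).differentiableOn
  have hMc i j := (hM i j).continuousOn
  have hNc i j := (hN i j).continuousOn
  simp only [mul_apply, Fin.sum_univ_two, adjugate_fin_two]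
  constructor <;> fin_cases i <;> fin_cases j <;>
    simp only [Fin.isValue, Fin.zero_eta, Fin.mk_one, of_apply, cons_val', cons_val_zero,
      cons_val_one, cons_val_fin_one, neg_mul] <;>
    fun_prop

end Matrix

/-- Suppose `ν̂` and `ν̂'` are continuous `SL(2,ℂ)`-valued functions on the closed unit
disk, holomorphic in the open disk, with `ν̂(γ)ν̂ᵀ(1/γ) = ν̂'(γ)ν̂'ᵀ(1/γ)` on `|γ| = 1`.
Then `K := ν̂⁻¹(γ)ν̂'(γ)` is a constant matrix independent of `γ`, and `K` is orthogonal
(`KKᵀ = 1`). -/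
theorem stmt_14 (ν ν' : ℂ → Matrix (Fin 2) (Fin 2) ℂ)
    (hνc : ∀ i j : Fin 2, ContinuousOn (fun γ => ν γ i j) {γ : ℂ | ‖γ‖ ≤ 1})
    (hν'c : ∀ i j : Fin 2, ContinuousOn (fun γ => ν' γ i j) {γ : ℂ | ‖γ‖ ≤ 1})
    (hνh : ∀ i j : Fin 2, DifferentiableOn ℂ (fun γ => ν γ i j) {γ : ℂ | ‖γ‖ < 1})
    (hν'h : ∀ i j : Fin 2, DifferentiableOn ℂ (fun γ => ν' γ i j) {γ : ℂ | ‖γ‖ < 1})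
    (hνdet : ∀ γ : ℂ, ‖γ‖ ≤ 1 → (ν γ).det = 1)
    (hν'det : ∀ γ : ℂ, ‖γ‖ ≤ 1 → (ν' γ).det = 1)
    (hfact : ∀ γ : ℂ, ‖γ‖ = 1 →
      ν γ * (ν (1 / γ))ᵀ = ν' γ * (ν' (1 / γ))ᵀ) :
    ∃ K : Matrix (Fin 2) (Fin 2) ℂ,
      (∀ γ : ℂ, ‖γ‖ ≤ 1 → (ν γ)⁻¹ * ν' γ = K) ∧ K * Kᵀ = 1 := by
  have hball : {γ : ℂ | ‖γ‖ < 1} = ball 0 1 := by ext; simp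
  have hclosedBall : {γ : ℂ | ‖γ‖ ≤ 1} = closedBall 0 1 := by ext; simp
  have hν i j : DiffContOnCl ℂ (fun γ => ν γ i j) (ball 0 1) :=
    .mk_ball (hball ▸ hνh i j) (hclosedBall ▸ hνc i j)
  have hν' i j : DiffContOnCl ℂ (fun γ => ν' γ i j) (ball 0 1) :=
    .mk_ball (hball ▸ hν'h i j) (hclosedBall ▸ hν'c i j)
  have hdet γ (hγ : ‖γ‖ ≤ 1) : IsUnit (ν γ).det := hνdet γ hγ ▸ isUnit_one
  have hdet' γ (hγ : ‖γ‖ ≤ 1) : IsUnit (ν' γ).det := hν'det γ hγ ▸ isUnit_one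
  have hboundary : ∀ γ ∈ sphere (0 : ℂ) 1,
      (ν γ).adjugate * ν' γ = ((ν' γ⁻¹).adjugate * ν γ⁻¹)ᵀ := by
    intro γ hγ
    rw [mem_sphere_zero_iff_norm] at hγ
    have hγinv : ‖γ⁻¹‖ ≤ 1 := by simp [hγ]
    rw [← inv_eq_adjugate_of_det_eq_one (hνdet γ hγ.le),
      ← inv_eq_adjugate_of_det_eq_one (hν'det γ⁻¹ hγinv)]
    exact inv_mul_eq_transpose_of_mul_transpose_eq (hdet γ hγ.le) (hdet' γ⁻¹ hγinv)
      (by simpa only [one_div] using hfact γ hγ)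
  have hconst : ∀ γ ∈ closedBall (0 : ℂ) 1,
      (ν γ).adjugate * ν' γ = ((ν' 0).adjugate * ν 0)ᵀ := fun γ hγ => ext fun i j =>
    DiffContOnCl.eqOn_closedBall_of_eqOn_sphere_comp_inv
      (diffContOnCl_adjugate_mul_apply hν hν' i j) (diffContOnCl_adjugate_mul_apply hν' hν j i)
      (fun z hz => congrFun (congrFun (hboundary z hz) i) j) hγ
  have hone : ‖(1 : ℂ)‖ ≤ 1 := norm_one.le
  refine ⟨(ν 1)⁻¹ * ν' 1, fun γ hγ => ?_, ?_⟩
  · rw [inv_eq_adjugate_of_det_eq_one (hνdet γ hγ), inv_eq_adjugate_of_det_eq_one (hνdet 1 hone),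
      hconst γ (mem_closedBall_zero_iff.mpr hγ), hconst 1 (mem_closedBall_zero_iff.mpr hone)]
  · exact inv_mul_mul_transpose_eq_one_of_mul_transpose_eq (hdet 1 hone) (hdet' 1 hone)
      (by simpa using hfact 1 norm_one)
end

section
/- Let s₁, s₂ be invertible 2×2 matrices over a commutative Poisson algebra with pointwise Sklyanin-type bracket {s₁⊗, s₂⊗}(v,w) = (1/(v−w))[Ω, s₁(v)⊗s₂(w)] (for v ≠ w). Then the determinant is Casimir: {det s₁(v), (s₂(w))_a^b} = 0 for all indices a, b and all v ≠ w. -/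
/-!
Leibniz's rule gives Jacobi's formula `{det s, X} = tr (adj s · {s, X})` for the bracket with
a fixed `X`. The Sklyanin bracket writes `{s(v), s(w)_c^d}` as `(v - w)⁻¹ (L s(v) - s(v) M)`, where
`L` and `M` are the `(c, d)` blocks of `Ω (1 ⊗ s(w))` and `(1 ⊗ s(w)) Ω`. Cyclicity of the trace
and `adj s · s = s · adj s = det s` reduce the trace to `det s(v) (tr L - tr M)`, and both traces
vanish because `Ω` is traceless in each tensor factor.
-/

open Matrix

/-- Components of the Casimir element `Ω` of `𝔰𝔩₂`:
`Ω_a{}^b{}_c{}^d = δ_a^d δ_c^b − (1/2) δ_a^b δ_c^d`, with first pair `(a,c)` and second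
pair `(b,d)`. -/
noncomputable def OmC : Fin 2 × Fin 2 → Fin 2 × Fin 2 → ℂ := fun p q =>
  (if p.1 = q.2 ∧ p.2 = q.1 then 1 else 0) -
    (1 / 2) * (if p.1 = q.1 ∧ p.2 = q.2 then 1 else 0)

theorem sum_OmC_diag_left (c f : Fin 2) : ∑ a, OmC (a, c) (a, f) = 0 := by
  simp only [OmC, Fin.sum_univ_two]
  fin_cases c <;> fin_cases f <;> norm_num

theorem sum_OmC_diag_right (f d : Fin 2) : ∑ b, OmC (b, f) (b, d) = 0 := by
  simp only [OmC, Fin.sum_univ_two]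
  fin_cases f <;> fin_cases d <;> norm_num

theorem Matrix.derivation_det_fin_two {R : Type*} [CommRing R] (D : R →+ R)
    (hD : ∀ x y, D (x * y) = x * D y + y * D x) (M : Matrix (Fin 2) (Fin 2) R) :
    D M.det = trace (adjugate M * M.map D) := by
  rw [det_fin_two, map_sub, hD, hD, trace_fin_two, adjugate_fin_two]
  simp only [mul_apply, Fin.sum_univ_two, of_apply, cons_val', cons_val_zero, cons_val_one,
    empty_val', cons_val_fin_one, map_apply, neg_mul]
  ring

theorem Matrix.trace_adjugate_mul_sub {n R : Type*} [Fintype n] [DecidableEq n] [CommRing R]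
    (A L M : Matrix n n R) :
    trace (adjugate A * (L * A - A * M)) = A.det * (trace L - trace M) := by
  rw [Matrix.mul_sub, trace_sub, ← Matrix.mul_assoc, ← Matrix.mul_assoc, trace_mul_cycle,
    mul_adjugate, adjugate_mul, smul_mul_assoc, smul_mul_assoc, Matrix.one_mul, Matrix.one_mul,
    trace_smul, trace_smul, smul_eq_mul, smul_eq_mul, mul_sub]

section
variable {R : Type*} [CommRing R] [Algebra ℂ R]

/-- The `(c, d)` block of `Ω (1 ⊗ B)`, as a matrix in the first tensor factor. -/
noncomputable def OmC_mulRight (B : Matrix (Fin 2) (Fin 2) R) (c d : Fin 2) :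
    Matrix (Fin 2) (Fin 2) R :=
  of fun a e => ∑ f, OmC (a, c) (e, f) • B f d

/-- The `(c, d)` block of `(1 ⊗ B) Ω`, as a matrix in the first tensor factor. -/
noncomputable def OmC_mulLeft (B : Matrix (Fin 2) (Fin 2) R) (c d : Fin 2) :
    Matrix (Fin 2) (Fin 2) R :=
  of fun e b => ∑ f, OmC (e, f) (b, d) • B c f

theorem trace_OmC_mulRight (B : Matrix (Fin 2) (Fin 2) R) (c d : Fin 2) :
    trace (OmC_mulRight B c d) = 0 := by
  simp only [trace, diag_apply, OmC_mulRight, of_apply]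
  rw [Finset.sum_comm]
  simp only [← Finset.sum_smul, sum_OmC_diag_left, zero_smul, Finset.sum_const_zero]

theorem trace_OmC_mulLeft (B : Matrix (Fin 2) (Fin 2) R) (c d : Fin 2) :
    trace (OmC_mulLeft B c d) = 0 := by
  simp only [trace, diag_apply, OmC_mulLeft, of_apply]
  rw [Finset.sum_comm]
  simp only [← Finset.sum_smul, sum_OmC_diag_right, zero_smul, Finset.sum_const_zero]

theorem sum_OmC_commutator_eq (A B : Matrix (Fin 2) (Fin 2) R) (a b c d : Fin 2) :
    ∑ e, ∑ f, (OmC (a, c) (e, f) • (A e b * B f d) - OmC (e, f) (b, d) • (A a e * B c f)) =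
      (OmC_mulRight B c d * A - A * OmC_mulLeft B c d) a b := by
  simp only [Matrix.sub_apply, mul_apply, OmC_mulRight, OmC_mulLeft, of_apply,
    Finset.sum_sub_distrib, Finset.sum_mul, Finset.mul_sum, smul_mul_assoc, mul_smul_comm]
  simp only [mul_comm (B _ _)]

end

theorem stmt_16_general {R : Type*} [CommRing R] [Algebra ℂ R]
    (br : R → R → R)
    (br_add : ∀ x y z, br (x + y) z = br x z + br y z)
    (br_leibniz : ∀ x y z, br (x * y) z = x * br y z + y * br x z)
    (s : ℂ → Matrix (Fin 2) (Fin 2) R)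
    (hbr : ∀ v w : ℂ, v ≠ w → ∀ a b c d : Fin 2,
      br (s v a b) (s w c d) =
        (v - w)⁻¹ • (∑ e : Fin 2, ∑ f : Fin 2,
          (OmC (a, c) (e, f) • (s v e b * s w f d) -
            OmC (e, f) (b, d) • (s v a e * s w c f))))
    (v w : ℂ) (hvw : v ≠ w) (c d : Fin 2) :
    br ((s v).det) (s w c d) = 0 := by
  let D : R →+ R := AddMonoidHom.mk' (br · (s w c d)) fun x y => br_add x y _
  have hsv : (s v).map D = (v - w)⁻¹ •
      (OmC_mulRight (s w) c d * s v - s v * OmC_mulLeft (s w) c d) := by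
    ext a b
    rw [map_apply, Matrix.smul_apply, ← sum_OmC_commutator_eq]
    exact hbr v w hvw a b c d
  calc br (s v).det (s w c d) = trace (adjugate (s v) * (s v).map D) :=
        derivation_det_fin_two D (fun x y => br_leibniz x y _) (s v)
    _ = 0 := by
        rw [hsv, mul_smul_comm, trace_smul, trace_adjugate_mul_sub, trace_OmC_mulRight,
          trace_OmC_mulLeft, sub_zero, mul_zero, smul_zero]

/-- For invertible `2×2` matrices `s(v)` over a commutative Poisson algebra whose
bracket is the Sklyanin-type bracket
`{s(v)_a{}^b, s(w)_c{}^d} = (1/(v−w)) [Ω, s(v)⊗s(w)]_a{}^b{}_c{}^d` (for `v ≠ w`),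
the determinant is Casimir: `{det s(v), s(w)_c{}^d} = 0`. -/
theorem stmt_16 {R : Type*} [CommRing R] [Algebra ℂ R]
    (br : R → R → R)
    (br_antisymm : ∀ x y, br x y = -br y x)
    (br_add : ∀ x y z, br (x + y) z = br x z + br y z)
    (br_leibniz : ∀ x y z, br (x * y) z = x * br y z + y * br x z)
    (s : ℂ → Matrix (Fin 2) (Fin 2) R)
    (hinv : ∀ v : ℂ, IsUnit ((s v).det))
    (hbr : ∀ v w : ℂ, v ≠ w → ∀ a b c d : Fin 2,
      br (s v a b) (s w c d) =
        (v - w)⁻¹ • (∑ e : Fin 2, ∑ f : Fin 2,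
          (OmC (a, c) (e, f) • (s v e b * s w f d) -
            OmC (e, f) (b, d) • (s v a e * s w c f))))
    (v w : ℂ) (hvw : v ≠ w) (c d : Fin 2) :
    br ((s v).det) (s w c d) = 0 :=
  stmt_16_general br br_add br_leibniz s hbr v w hvw c d
end
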